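/- With li(x) = Σ_{n≥1} (log x)^n/(n!·n·ζ(n+1)) and Li(x) = ∫_1^x (1 − u^{−1})/log u du, one has Li(x) − li(x) = O(√x · log log x / log x) as x → ∞. -/

import Mathlib

open Filter

/-- The logarithmic integral `Li(x) = ∫_1^x (1 - u⁻¹)/log u du`. -/
noncomputable def Li (x : ℝ) : ℝ :=
  ∫ u in (1:ℝ)..x, (1 - u⁻¹) / Real.log u

/-- `li(x) = ∑_{n ≥ 1} (log x)^n / (n! n ζ(n+1))`. -/
noncomputable def li (x : ℝ) : ℝ :=
  ∑' n : ℕ, Real.log x ^ (n + 1) /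
    ((Nat.factorial (n + 1) : ℝ) * ((n : ℝ) + 1) * (riemannZeta ((n : ℂ) + 2)).re)

open Real MeasureTheory Topology

-- summability of the basic series
lemma summable_A (L : ℝ) (hL : 0 ≤ L) :
    Summable (fun n : ℕ => L ^ (n+1) / ((Nat.factorial (n+1) : ℝ) * ((n:ℝ)+1))) := by
  have h := (Real.summable_pow_div_factorial L).comp_injective (add_left_injective 1)
  refine Summable.of_nonneg_of_le (fun n => by positivity) (fun n => ?_) h
  simp only [Function.comp]
  rw [div_le_div_iff₀ (by positivity) (by positivity)]
  have h1 : (1:ℝ) ≤ (n:ℝ) + 1 := by linarith [Nat.cast_nonneg (α := ℝ) n]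
  nlinarith [mul_nonneg (pow_nonneg hL (n+1)) (le_of_lt ((Nat.cast_pos (α := ℝ)).mpr (Nat.factorial_pos (n+1)))), Nat.cast_nonneg (α := ℝ) n]

lemma exp_tsum (t : ℝ) : Real.exp t = ∑' n : ℕ, t ^ n / (Nat.factorial n : ℝ) := by
  rw [Real.exp_eq_exp_ℝ, NormedSpace.exp_eq_tsum_div]

lemma exp_sub_one_div (t : ℝ) (ht : t ≠ 0) :
    (Real.exp t - 1) / t = ∑' n : ℕ, t ^ n / (Nat.factorial (n+1) : ℝ) := by
  have hsum := Real.summable_pow_div_factorial t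
  have h0 : Real.exp t = 1 + ∑' n : ℕ, t ^ (n+1) / (Nat.factorial (n+1) : ℝ) := by
    rw [exp_tsum, Summable.tsum_eq_zero_add hsum]; simp
  have : (Real.exp t - 1) = t * ∑' n : ℕ, t ^ n / (Nat.factorial (n+1) : ℝ) := by
    rw [h0, ← tsum_mul_left]
    rw [add_sub_cancel_left]
    exact tsum_congr fun n => by ring
  rw [this, mul_comm, mul_div_assoc, div_self ht, mul_one]

lemma key_int (L : ℝ) (hL : 0 ≤ L) (n : ℕ) :
    ∫ t in Set.Ioc (0:ℝ) L, t ^ n / (Nat.factorial (n+1) : ℝ)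
      = L ^ (n+1) / ((Nat.factorial (n+1) : ℝ) * ((n:ℝ)+1)) := by
  rw [← intervalIntegral.integral_of_le hL, intervalIntegral.integral_div,
    integral_pow]
  rw [zero_pow (by omega)]
  field_simp
  ring_nf
  try left; trivial

lemma int_tsum (L : ℝ) (hL : 0 ≤ L) :
    ∫ t in (0:ℝ)..L, (∑' n : ℕ, t ^ n / (Nat.factorial (n+1) : ℝ))
      = ∑' n : ℕ, L ^ (n+1) / ((Nat.factorial (n+1) : ℝ) * ((n:ℝ)+1)) := by
  rw [intervalIntegral.integral_of_le hL]
  have h1 : ∀ n : ℕ, IntegrableOn (fun t : ℝ => t ^ n / (Nat.factorial (n+1) : ℝ))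
      (Set.Ioc (0:ℝ) L) := fun n =>
    ((continuous_pow n).div_const _).integrableOn_Ioc
  have h2 : Summable fun n : ℕ =>
      ∫ t in Set.Ioc (0:ℝ) L, ‖t ^ n / (Nat.factorial (n+1) : ℝ)‖ := by
    have heq : ∀ n : ℕ, (∫ t in Set.Ioc (0:ℝ) L, ‖t ^ n / (Nat.factorial (n+1) : ℝ)‖)
        = L ^ (n+1) / ((Nat.factorial (n+1) : ℝ) * ((n:ℝ)+1)) := by
      intro n
      rw [← key_int L hL n]
      refine setIntegral_congr_fun measurableSet_Ioc (fun t ht => ?_)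
      exact Real.norm_of_nonneg (div_nonneg (pow_nonneg ht.1.le n) (Nat.cast_nonneg _))
    rw [funext heq]
    exact summable_A L hL
  rw [← MeasureTheory.integral_tsum_of_summable_integral_norm h1 h2]
  exact tsum_congr (key_int L hL)


noncomputable def gt1 : ℝ → ℝ := Function.update (fun u => (1 - u⁻¹) / Real.log u) 1 1

lemma gt1_tendsto : Tendsto (fun u => (1 - u⁻¹) / Real.log u) (𝓝[≠] (1:ℝ)) (𝓝 1) := by
  have hd : HasDerivAt Real.log 1 1 := by
    simpa using Real.hasDerivAt_log one_ne_zero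
  have hs : Tendsto (slope Real.log 1) (𝓝[≠] (1:ℝ)) (𝓝 1) :=
    hasDerivAt_iff_tendsto_slope.mp hd
  have hid : Tendsto (fun u : ℝ => u) (𝓝[≠] (1:ℝ)) (𝓝 1) :=
    tendsto_id.mono_left nhdsWithin_le_nhds
  have h2 : Tendsto (fun u : ℝ => u⁻¹ * (slope Real.log 1 u)⁻¹) (𝓝[≠] (1:ℝ)) (𝓝 1) := by
    have := (hid.inv₀ one_ne_zero).mul (hs.inv₀ one_ne_zero)
    simpa using this
  refine h2.congr' ?_
  have hpos : ∀ᶠ u in 𝓝[≠] (1:ℝ), 0 < u :=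
    eventually_nhdsWithin_of_eventually_nhds (eventually_gt_nhds one_pos)
  filter_upwards [hpos, eventually_mem_nhdsWithin] with u hu0 hu1
  simp only [Set.mem_compl_iff, Set.mem_singleton_iff] at hu1
  have hlog : Real.log u ≠ 0 := Real.log_ne_zero_of_pos_of_ne_one hu0 hu1
  rw [slope_def_field, Real.log_one, sub_zero]
  field_simp

lemma gt1_contOn : ContinuousOn gt1 (Set.Ici (1:ℝ)) := by
  intro u hu
  rcases eq_or_lt_of_le (Set.mem_Ici.mp hu) with h | h
  · subst h
    exact (continuousAt_update_same.mpr gt1_tendsto).continuousWithinAt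
  · have hu0 : (0:ℝ) < u := lt_trans one_pos h
    have hbase : ContinuousAt (fun u : ℝ => (1 - u⁻¹) / Real.log u) u :=
      (continuousAt_const.sub (continuousAt_inv₀ (ne_of_gt hu0))).div
        (Real.continuousAt_log (ne_of_gt hu0))
        (Real.log_ne_zero_of_pos_of_ne_one hu0 (ne_of_gt h))
    refine (hbase.congr ?_).continuousWithinAt
    filter_upwards [eventually_ne_nhds (ne_of_gt h)] with v hv
    simp [gt1, Function.update_of_ne hv]

lemma Li_eq (x : ℝ) (hx : 1 ≤ x) :
    Li x = ∫ t in (0:ℝ)..Real.log x, (Real.exp t - 1) / t := by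
  have hx0 : (0:ℝ) < x := lt_of_lt_of_le one_pos hx
  have hL : (0:ℝ) ≤ Real.log x := Real.log_nonneg hx
  have step1 : Li x = ∫ u in (1:ℝ)..x, gt1 u := by
    rw [Li, intervalIntegral.integral_of_le hx, intervalIntegral.integral_of_le hx]
    refine setIntegral_congr_fun measurableSet_Ioc (fun u hu => ?_)
    simp [gt1, Function.update_of_ne (ne_of_gt hu.1)]
  have himg : Real.exp '' Set.uIcc 0 (Real.log x) ⊆ Set.Ici (1:ℝ) := by
    rintro - ⟨t, ht, rfl⟩
    rw [Set.uIcc_of_le hL] at ht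
    exact Set.mem_Ici.mpr (by simpa using Real.exp_le_exp.mpr ht.1)
  have step2 : (∫ u in (1:ℝ)..x, gt1 u)
      = ∫ t in (0:ℝ)..Real.log x, Real.exp t • gt1 (Real.exp t) := by
    have h := intervalIntegral.integral_comp_smul_deriv'
      (a := 0) (b := Real.log x) (f := Real.exp) (f' := Real.exp) (g := gt1)
      (fun t _ => Real.hasDerivAt_exp t) Real.continuous_exp.continuousOn
      (gt1_contOn.mono himg)
    rw [Real.exp_zero, Real.exp_log hx0] at h
    exact h.symm
  have step3 : (∫ t in (0:ℝ)..Real.log x, Real.exp t • gt1 (Real.exp t))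
      = ∫ t in (0:ℝ)..Real.log x, (Real.exp t - 1) / t := by
    rw [intervalIntegral.integral_of_le hL, intervalIntegral.integral_of_le hL]
    refine setIntegral_congr_fun measurableSet_Ioc (fun t ht => ?_)
    have ht0 : 0 < t := ht.1
    have hexp : Real.exp t ≠ 1 := by
      have : Real.exp 0 < Real.exp t := Real.exp_lt_exp.mpr ht0
      rw [Real.exp_zero] at this
      exact ne_of_gt this
    have hexp0 : Real.exp t ≠ 0 := (Real.exp_pos t).ne'
    simp only [gt1, Function.update_of_ne hexp, Real.log_exp, smul_eq_mul]
    field_simp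
  rw [step1, step2, step3]

lemma Z_summable (n : ℕ) : Summable (fun k : ℕ => (1:ℝ) / ((k:ℝ)+1) ^ (n+2)) := by
  have h : Summable (fun k : ℕ => (1:ℝ) / (k:ℝ) ^ (n+2)) :=
    Real.summable_one_div_nat_pow.mpr (by omega)
  have := (summable_nat_add_iff 1).mpr h
  refine this.congr (fun k => ?_)
  push_cast
  ring_nf

lemma zeta_re_eq (n : ℕ) :
    (riemannZeta ((n:ℂ) + 2)).re = ∑' k : ℕ, (1:ℝ) / ((k:ℝ)+1) ^ (n+2) := by
  have hre : (1:ℝ) < ((n:ℂ) + 2).re := by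
    simp only [Complex.add_re, Complex.natCast_re, Complex.re_ofNat]
    linarith [Nat.cast_nonneg (α := ℝ) n]
  rw [zeta_eq_tsum_one_div_nat_add_one_cpow hre]
  have hcast : ∀ k : ℕ, (1:ℂ) / ((k:ℂ)+1) ^ ((n:ℂ)+2)
      = (((1:ℝ) / ((k:ℝ)+1) ^ (n+2) : ℝ) : ℂ) := by
    intro k
    have h1 : ((n:ℂ)+2) = ((n+2 : ℕ) : ℂ) := by push_cast; ring
    rw [h1, Complex.cpow_natCast]
    push_cast
    ring
  rw [tsum_congr hcast, ← Complex.ofReal_tsum, Complex.ofReal_re]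

lemma telescope_sum : HasSum (fun k : ℕ => (1:ℝ)/((k:ℝ)+1) - 1/((k:ℝ)+2)) 1 := by
  have hsumm : Summable (fun k : ℕ => (1:ℝ)/((k:ℝ)+1) - 1/((k:ℝ)+2)) := by
    have h2 := Z_summable 0
    refine h2.of_nonneg_of_le (fun k => ?_) (fun k => ?_)
    · rw [sub_nonneg]
      apply div_le_div_of_nonneg_left one_pos.le (by positivity) (by linarith)
    · have hk0 : (0:ℝ) < (k:ℝ)+1 := by positivity
      have hk2 : (0:ℝ) < (k:ℝ)+2 := by positivity
      rw [div_sub_div _ _ (ne_of_gt hk0) (ne_of_gt hk2)]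
      rw [div_le_div_iff₀ (by positivity) (by positivity)]
      ring_nf
      nlinarith [sq_nonneg ((k:ℝ)+1)]
  rw [hsumm.hasSum_iff_tendsto_nat]
  have hps : ∀ N : ℕ, ∑ k ∈ Finset.range N, ((1:ℝ)/((k:ℝ)+1) - 1/((k:ℝ)+2))
      = 1 - 1/((N:ℝ)+1) := by
    intro N
    have e : ∀ k : ℕ, (1:ℝ)/((k:ℝ)+1) - 1/((k:ℝ)+2)
        = (fun k : ℕ => (1:ℝ)/((k:ℝ)+1)) k - (fun k : ℕ => (1:ℝ)/((k:ℝ)+1)) (k+1) :=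
      fun k => by push_cast; ring
    rw [Finset.sum_congr rfl (fun k _ => e k), Finset.sum_range_sub']
    norm_num
  simp only [hps]
  have h0 : Tendsto (fun N : ℕ => 1/((N:ℝ)+1)) atTop (𝓝 0) :=
    tendsto_one_div_add_atTop_nhds_zero_nat
  simpa using tendsto_const_nhds.sub h0

lemma Z_bounds (n : ℕ) : 1 ≤ (riemannZeta ((n:ℂ) + 2)).re ∧
    (riemannZeta ((n:ℂ) + 2)).re ≤ 1 + (1/2:ℝ)^n := by
  rw [zeta_re_eq n]
  have hsum := Z_summable n
  have hsplit := Summable.tsum_eq_zero_add hsum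
  have htail : Summable (fun k : ℕ => (1:ℝ) / (((k:ℝ)+1)+1) ^ (n+2)) := by
    have := (summable_nat_add_iff 1).mpr hsum
    refine this.congr (fun k => ?_)
    push_cast
    ring_nf
  have h0 : (1:ℝ) / (((0:ℕ):ℝ)+1) ^ (n+2) = 1 := by norm_num
  rw [h0] at hsplit
  constructor
  · rw [hsplit]
    have : 0 ≤ ∑' k : ℕ, (1:ℝ) / (((k:ℝ)+1)+1) ^ (n+2) :=
      tsum_nonneg (fun k => by positivity)
    push_cast at this ⊢
    linarith
  · rw [hsplit]
    have hbound : ∀ k : ℕ, (1:ℝ) / ((((k:ℕ):ℝ)+1)+1) ^ (n+2)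
        ≤ (1/2:ℝ)^n * ((1:ℝ)/((k:ℝ)+1) - 1/((k:ℝ)+2)) := by
      intro k
      have hk2 : (0:ℝ) < (k:ℝ)+2 := by positivity
      have hk1 : (0:ℝ) < (k:ℝ)+1 := by positivity
      have hdiff : (1:ℝ)/((k:ℝ)+1) - 1/((k:ℝ)+2) = 1/(((k:ℝ)+1)*((k:ℝ)+2)) := by
        field_simp
        norm_num
      rw [hdiff]
      have hpow : (2:ℝ)^n * (((k:ℝ)+1)*((k:ℝ)+2)) ≤ ((k:ℝ)+2) ^ (n+2) := by
        have h1 : (2:ℝ)^n ≤ ((k:ℝ)+2)^n :=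
          pow_le_pow_left₀ (by norm_num) (by linarith [Nat.cast_nonneg (α := ℝ) k]) n
        have h2 : ((k:ℝ)+1)*((k:ℝ)+2) ≤ ((k:ℝ)+2)^2 := by nlinarith
        calc (2:ℝ)^n * (((k:ℝ)+1)*((k:ℝ)+2)) ≤ ((k:ℝ)+2)^n * ((k:ℝ)+2)^2 := by
              apply mul_le_mul h1 h2 (by positivity) (by positivity)
          _ = ((k:ℝ)+2) ^ (n+2) := by rw [← pow_add]
      have hlhs : ((((k:ℕ):ℝ)+1)+1) = (k:ℝ)+2 := by ring
      rw [hlhs]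
      rw [div_pow, one_pow, div_mul_div_comm, one_mul]
      exact one_div_le_one_div_of_le (by positivity) hpow
    have hle := Summable.tsum_le_tsum hbound htail
      ((telescope_sum.mul_left ((1/2:ℝ)^n)).summable)
    rw [(telescope_sum.mul_left ((1/2:ℝ)^n)).tsum_eq, mul_one] at hle
    push_cast at hle ⊢
    linarith

lemma Li_series (x : ℝ) (hx : 1 ≤ x) :
    Li x = ∑' n : ℕ, (Real.log x)^(n+1) / ((Nat.factorial (n+1) : ℝ) * ((n:ℝ)+1)) := by
  have hL : 0 ≤ Real.log x := Real.log_nonneg hx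
  rw [Li_eq x hx, ← int_tsum (Real.log x) hL]
  rw [intervalIntegral.integral_of_le hL, intervalIntegral.integral_of_le hL]
  exact setIntegral_congr_fun measurableSet_Ioc
    (fun t ht => exp_sub_one_div t (ne_of_gt ht.1))
lemma diff_bound (x : ℝ) (hx : 3 ≤ x) :
    0 ≤ Li x - li x ∧ Li x - li x ≤ 8 * Real.sqrt x / Real.log x := by
  have hx1 : (1:ℝ) ≤ x := by linarith
  have hx0 : (0:ℝ) < x := by linarith
  set L := Real.log x with hLdef
  have hL : 0 ≤ L := Real.log_nonneg hx1
  have hLpos : 0 < L := Real.log_pos (by linarith)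
  set a : ℕ → ℝ := fun n => L ^ (n+1) / ((Nat.factorial (n+1) : ℝ) * ((n:ℝ)+1)) with ha
  set Z : ℕ → ℝ := fun n => (riemannZeta ((n:ℂ) + 2)).re with hZ
  have hZ1 : ∀ n, 1 ≤ Z n := fun n => (Z_bounds n).1
  have hZ0 : ∀ n, 0 < Z n := fun n => lt_of_lt_of_le one_pos (hZ1 n)
  have hZ2 : ∀ n, Z n ≤ 1 + (1/2:ℝ)^n := fun n => (Z_bounds n).2
  have ha0 : ∀ n, 0 ≤ a n := fun n => by positivity
  have hsa : Summable a := summable_A L hL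
  have hli : li x = ∑' n : ℕ, a n / Z n := by
    refine tsum_congr (fun n => ?_)
    rw [ha]
    simp only
    rw [div_div]
  have hsli : Summable (fun n => a n / Z n) :=
    hsa.of_nonneg_of_le (fun n => div_nonneg (ha0 n) (hZ0 n).le)
      (fun n => div_le_self (ha0 n) (hZ1 n))
  have hdiff : Li x - li x = ∑' n : ℕ, (a n - a n / Z n) := by
    rw [Li_series x hx1, hli, ← Summable.tsum_sub hsa hsli]
  -- termwise bound
  set b : ℕ → ℝ := fun n => 8 / L * ((L/2) ^ (n+2) / (Nat.factorial (n+2) : ℝ)) with hb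
  have hsb : Summable b := by
    apply Summable.mul_left
    exact (summable_nat_add_iff 2).mpr (Real.summable_pow_div_factorial (L/2))
  have hterm : ∀ n : ℕ, a n - a n / Z n ≤ b n := by
    intro n
    have h1 : a n - a n / Z n ≤ a n * (1/2:ℝ)^n := by
      have hz := hZ0 n
      have h2 : 1 - 1 / Z n ≤ (1/2:ℝ)^n := by
        have hinv : 2 - Z n ≤ 1 / Z n := by
          rw [le_div_iff₀ (hZ0 n)]
          nlinarith [sq_nonneg (Z n - 1)]
        linarith [hZ2 n]
      have := mul_le_mul_of_nonneg_left h2 (ha0 n)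
      calc a n - a n / Z n = a n * (1 - 1 / Z n) := by ring
        _ ≤ a n * (1/2:ℝ)^n := this
    refine le_trans h1 ?_
    have hfac : (Nat.factorial (n+2) : ℝ) = (Nat.factorial (n+1) : ℝ) * ((n:ℝ)+2) := by
      rw [show n+2 = (n+1)+1 from rfl, Nat.factorial_succ]
      push_cast
      ring
    have hf1 : (0:ℝ) < (Nat.factorial (n+1):ℝ) := Nat.cast_pos.mpr (Nat.factorial_pos _)
    have hkey : (1:ℝ)/((Nat.factorial (n+1):ℝ)*((n:ℝ)+1)) ≤ 2/(Nat.factorial (n+2):ℝ) := by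
      rw [hfac, div_le_div_iff₀ (by positivity) (by positivity)]
      nlinarith [mul_nonneg hf1.le (Nat.cast_nonneg (α := ℝ) n)]
    have hbn : b n = L^(n+1) * ((1/2:ℝ)^n * (2/(Nat.factorial (n+2):ℝ))) := by
      simp only [hb, div_pow]
      rw [pow_succ L (n+1)]
      have hf2 : (0:ℝ) < (Nat.factorial (n+2):ℝ) := Nat.cast_pos.mpr (Nat.factorial_pos _)
      field_simp
      ring
    have han : a n * (1/2:ℝ)^n
        = L^(n+1) * ((1/2:ℝ)^n * (1/((Nat.factorial (n+1):ℝ)*((n:ℝ)+1)))) := by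
      simp only [ha]
      ring
    rw [han, hbn]
    apply mul_le_mul_of_nonneg_left _ (pow_nonneg hL _)
    exact mul_le_mul_of_nonneg_left hkey (by positivity)
  have htermnn : ∀ n : ℕ, 0 ≤ a n - a n / Z n := by
    intro n
    have : a n / Z n ≤ a n := div_le_self (ha0 n) (hZ1 n)
    linarith
  have hsd : Summable (fun n => a n - a n / Z n) := hsa.sub hsli
  constructor
  · rw [hdiff]
    exact tsum_nonneg htermnn
  · rw [hdiff]
    have hle : ∑' n, (a n - a n / Z n) ≤ ∑' n, b n := Summable.tsum_le_tsum hterm hsd hsb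
    refine le_trans hle ?_
    have hsum2 : ∑' n : ℕ, (L/2) ^ (n+2) / (Nat.factorial (n+2) : ℝ) ≤ Real.exp (L/2) := by
      have hf := Real.summable_pow_div_factorial (L/2)
      have hexp : Real.exp (L/2) = ∑' n : ℕ, (L/2)^n / (Nat.factorial n : ℝ) := by
        rw [Real.exp_eq_exp_ℝ, NormedSpace.exp_eq_tsum_div]
      rw [hexp, Summable.tsum_eq_zero_add hf, Summable.tsum_eq_zero_add ((summable_nat_add_iff 1).mpr hf)]
      have h0 : (0:ℝ) ≤ (L/2)^0 / (Nat.factorial 0 : ℝ) := by positivity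
      have h1 : (0:ℝ) ≤ (L/2)^(0+1) / (Nat.factorial (0+1) : ℝ) := by positivity
      have : (∑' n : ℕ, (L/2)^(n+1+1) / (Nat.factorial (n+1+1) : ℝ))
          = ∑' n : ℕ, (L/2)^(n+2) / (Nat.factorial (n+2) : ℝ) := by norm_num
      linarith [this]
    rw [hb, tsum_mul_left]
    have hsqrt : Real.exp (L/2) = Real.sqrt x := by
      rw [Real.sqrt_eq_rpow, Real.rpow_def_of_pos hx0]
      ring_nf
      rw [hLdef]
    calc 8 / L * ∑' n : ℕ, (L/2) ^ (n+2) / (Nat.factorial (n+2) : ℝ)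
        ≤ 8 / L * Real.exp (L/2) := by
          apply mul_le_mul_of_nonneg_left hsum2 (by positivity)
      _ = 8 * Real.sqrt x / L := by rw [hsqrt]; ring

/-- `Li(x) - li(x) = O(√x · log log x / log x)` as `x → ∞`. -/
theorem statement9 :
    (fun x : ℝ => Li x - li x) =O[atTop]
      (fun x : ℝ => Real.sqrt x * Real.log (Real.log x) / Real.log x) := by
  rw [Asymptotics.isBigO_iff]
  refine ⟨8, ?_⟩
  filter_upwards [eventually_ge_atTop (max 3 (Real.exp (Real.exp 1)))] with x hx
  have hx3 : (3:ℝ) ≤ x := le_trans (le_max_left _ _) hx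
  have hxe : Real.exp (Real.exp 1) ≤ x := le_trans (le_max_right _ _) hx
  have hx0 : (0:ℝ) < x := by linarith
  have hL : Real.exp 1 ≤ Real.log x := (Real.le_log_iff_exp_le hx0).mpr hxe
  have hL0 : (0:ℝ) < Real.log x := lt_of_lt_of_le (Real.exp_pos 1) hL
  have hLL : (1:ℝ) ≤ Real.log (Real.log x) := by
    have := Real.log_le_log (Real.exp_pos 1) hL
    rwa [Real.log_exp] at this
  obtain ⟨h0, h1⟩ := diff_bound x hx3
  have hrhs0 : 0 ≤ Real.sqrt x * Real.log (Real.log x) / Real.log x :=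
    div_nonneg (mul_nonneg (Real.sqrt_nonneg x) (by linarith)) hL0.le
  rw [Real.norm_eq_abs, Real.norm_eq_abs, abs_of_nonneg h0, abs_of_nonneg hrhs0]
  calc Li x - li x ≤ 8 * Real.sqrt x / Real.log x := h1
    _ ≤ 8 * (Real.sqrt x * Real.log (Real.log x) / Real.log x) := by
        rw [mul_div_assoc]
        apply mul_le_mul_of_nonneg_left _ (by norm_num : (0:ℝ) ≤ 8)
        exact (div_le_div_iff_of_pos_right hL0).mpr
          (le_mul_of_one_le_right (Real.sqrt_nonneg x) hLL)
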